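/- The Bachelier call price formula: if S_T = S + σ√τ · Z where Z is a standard normal random variable, σ > 0, τ > 0, then E[(S_T − K)_+] = (S − K)·Φ((S−K)/(σ√τ)) + σ√τ·φ((S−K)/(σ√τ)), where φ and Φ are the standard normal pdf and cdf. -/

import Mathlib

/-!
Against the standard normal density `φ`, the payoff `(c + a Z)_+` (with `a > 0`) is
`c + a z` on `z > -c/a` and zero elsewhere, so its mean is
`c · ∫_{-c/a}^∞ φ + a · ∫_{-c/a}^∞ z φ`.
By symmetry of `φ` the first integral is `Φ(c/a)`, and since `φ' = -z φ` the second is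
`φ(-c/a) = φ(c/a)`.
-/

open MeasureTheory ProbabilityTheory Real Filter Topology Set

lemma max_add_mul_zero_eq_indicator {𝕜 : Type*}
    [Field 𝕜] [LinearOrder 𝕜] [IsStrictOrderedRing 𝕜] (c : 𝕜) {a : 𝕜} (ha : 0 < a) (z : 𝕜) :
    max (c + a * z) 0 = (Ioi (-(c / a))).indicator (fun z => c + a * z) z := by
  have hiff : z ∈ Ioi (-(c / a)) ↔ 0 < c + a * z := by
    rw [mem_Ioi, ← neg_div, div_lt_iff₀ ha, neg_lt_iff_pos_add, mul_comm, add_comm]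
  by_cases hz : z ∈ Ioi (-(c / a))
  · rw [indicator_of_mem hz, max_eq_left (hiff.1 hz).le]
  · rw [indicator_of_notMem hz, max_eq_right (not_lt.1 (hiff.not.1 hz))]

namespace ProbabilityTheory

lemma gaussianPDFReal_zero_one (x : ℝ) :
    gaussianPDFReal 0 1 x = exp (-x ^ 2 / 2) / √(2 * π) := by
  simp [gaussianPDFReal, div_eq_inv_mul]

lemma gaussianPDFReal_zero_one_neg (x : ℝ) :
    gaussianPDFReal 0 1 (-x) = gaussianPDFReal 0 1 x := by
  simp only [gaussianPDFReal_zero_one, neg_sq]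

lemma hasDerivAt_gaussianPDFReal_zero_one (x : ℝ) :
    HasDerivAt (gaussianPDFReal 0 1) (-x * gaussianPDFReal 0 1 x) x := by
  have h := (((hasDerivAt_pow 2 x).neg.div_const 2).exp).div_const (√(2 * π))
  simp only [Pi.neg_apply, Nat.cast_ofNat] at h
  rw [funext gaussianPDFReal_zero_one]
  refine h.congr_deriv ?_
  ring

lemma integrable_mul_gaussianPDFReal_zero_one :
    Integrable fun x : ℝ => x * gaussianPDFReal 0 1 x := by
  simp_rw [gaussianPDFReal_zero_one, ← mul_div_assoc]
  refine Integrable.div_const ?_ _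
  convert integrable_mul_exp_neg_mul_sq (b := 1 / 2) (by norm_num) using 4
  ring

lemma tendsto_gaussianPDFReal_zero_one_atTop :
    Tendsto (gaussianPDFReal 0 1) atTop (𝓝 0) := by
  rw [funext gaussianPDFReal_zero_one, ← zero_div (√(2 * π))]
  refine Tendsto.div_const ?_ _
  have hsq : Tendsto (fun x : ℝ => x ^ 2 / 2) atTop atTop :=
    (tendsto_pow_atTop two_ne_zero).atTop_div_const two_pos
  simpa only [Function.comp_def, neg_div] using tendsto_exp_neg_atTop_nhds_zero.comp hsq

lemma integral_Ioi_mul_gaussianPDFReal_zero_one (d : ℝ) :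
    ∫ x in Ioi d, x * gaussianPDFReal 0 1 x = gaussianPDFReal 0 1 d := by
  have h := integral_Ioi_of_hasDerivAt_of_tendsto' (a := d) (f := -gaussianPDFReal 0 1)
    (fun x _ => by simpa using (hasDerivAt_gaussianPDFReal_zero_one x).neg)
    integrable_mul_gaussianPDFReal_zero_one.integrableOn
    (by simpa only [Pi.neg_def, neg_zero] using tendsto_gaussianPDFReal_zero_one_atTop.neg)
  simpa using h

lemma integral_Ioi_neg_gaussianPDFReal_zero_one (d : ℝ) :
    ∫ x in Ioi (-d), gaussianPDFReal 0 1 x = ∫ x in Iic d, gaussianPDFReal 0 1 x := by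
  rw [← integral_comp_neg_Iic]
  simp_rw [gaussianPDFReal_zero_one_neg]

lemma integral_max_add_mul_zero_gaussianReal (c : ℝ) {a : ℝ} (ha : 0 < a) :
    ∫ z, max (c + a * z) 0 ∂gaussianReal 0 1
      = c * (∫ x in Iic (c / a), gaussianPDFReal 0 1 x) + a * gaussianPDFReal 0 1 (c / a) := by
  rw [integral_gaussianReal_eq_integral_smul one_ne_zero]
  simp_rw [max_add_mul_zero_eq_indicator c ha, smul_eq_mul, ← indicator_mul_right]
  rw [integral_indicator measurableSet_Ioi]
  calc ∫ z in Ioi (-(c / a)), gaussianPDFReal 0 1 z * (c + a * z)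
      = c * (∫ z in Ioi (-(c / a)), gaussianPDFReal 0 1 z)
        + a * ∫ z in Ioi (-(c / a)), z * gaussianPDFReal 0 1 z := by
        rw [← integral_const_mul, ← integral_const_mul, ← integral_add]
        · congr 1 with z
          ring
        · exact ((integrable_gaussianPDFReal 0 1).const_mul c).integrableOn
        · exact (integrable_mul_gaussianPDFReal_zero_one.const_mul a).integrableOn
    _ = c * (∫ x in Iic (c / a), gaussianPDFReal 0 1 x) + a * gaussianPDFReal 0 1 (c / a) := by
        rw [integral_Ioi_neg_gaussianPDFReal_zero_one, integral_Ioi_mul_gaussianPDFReal_zero_one,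
          gaussianPDFReal_zero_one_neg]

end ProbabilityTheory

/-- Bachelier call price formula: if `S_T = S + σ√τ Z` with `Z` standard normal,
then `E[(S_T − K)_+] = (S−K)Φ(d) + σ√τ φ(d)` with `d = (S−K)/(σ√τ)`,
`φ` and `Φ` the standard normal pdf and cdf. -/
theorem stmt_7 (S K σ τ : ℝ) (hσ : 0 < σ) (hτ : 0 < τ)
    (φ Φ : ℝ → ℝ)
    (hφ : ∀ u, φ u = Real.exp (-u ^ 2 / 2) / Real.sqrt (2 * Real.pi))
    (hΦ : ∀ u, Φ u = ∫ x in Set.Iic u, φ x) :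
    (∫ z, max (S + σ * Real.sqrt τ * z - K) 0 ∂(gaussianReal 0 1))
      = (S - K) * Φ ((S - K) / (σ * Real.sqrt τ))
        + σ * Real.sqrt τ * φ ((S - K) / (σ * Real.sqrt τ)) := by
  obtain rfl : φ = gaussianPDFReal 0 1 :=
    funext fun u => (hφ u).trans (gaussianPDFReal_zero_one u).symm
  have ha : 0 < σ * √τ := by positivity
  rw [hΦ, ← integral_max_add_mul_zero_gaussianReal (S - K) ha]
  simp_rw [add_sub_right_comm]
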